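/- Fix ρ > 0 and W > 0, and for N ∈ ℕ with N ≥ 2 set L_N = N/(ρW) and τ_N = iρW²/N. Let K_N(z,z′) be the type D_N correlation kernel (𝒩 = 2(N−1), J(j) = j−1) built with (L, τ) = (L_N, τ_N). Then for every z, z′ ∈ ℂ (z = x+iy, z′ = x′+iy′), lim_{N→∞} K_N(z,z′) = ρ e^{−2πρ(y²+(y′)²)} [ ∫_{−√ρ W}^{√ρ W} e^{−πλ² + 2πi√ρ(z−conj(z′))λ} θ₂(√ρ W (iλ + 2√ρ z); 2iρW²) θ₂(√ρ W (iλ − 2√ρ conj(z′)); 2iρW²) dλ + ∫_{−√ρ W}^{√ρ W} e^{−πλ² + 2πi√ρ(z+conj(z′))λ} θ₂(√ρ W (iλ + 2√ρ z); 2iρW²) θ₂(√ρ W (iλ + 2√ρ conj(z′)); 2iρW²) dλ ]. -/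

import Mathlib

open Complex MeasureTheory
open scoped Real ComplexConjugate

noncomputable section

/-- The Jacobi theta function θ₀. -/
def jtheta0 (v τ : ℂ) : ℂ :=
  ∑' n : ℤ, (-1 : ℂ) ^ n * Complex.exp (π * I * τ * (n : ℂ) ^ 2) *
    Complex.exp (2 * π * I * (n : ℂ) * v)

/-- The Jacobi theta function θ₁. -/
def jtheta1 (v τ : ℂ) : ℂ :=
  I * ∑' n : ℤ, (-1 : ℂ) ^ n * Complex.exp (π * I * τ * ((n : ℂ) - 1 / 2) ^ 2) *
    Complex.exp ((2 * (n : ℂ) - 1) * π * I * v)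

/-- The Jacobi theta function θ₂. -/
def jtheta2 (v τ : ℂ) : ℂ :=
  ∑' n : ℤ, Complex.exp (π * I * τ * ((n : ℂ) - 1 / 2) ^ 2) *
    Complex.exp ((2 * (n : ℂ) - 1) * π * I * v)

/-- The Jacobi theta function θ₃. -/
def jtheta3 (v τ : ℂ) : ℂ :=
  ∑' n : ℤ, Complex.exp (π * I * τ * (n : ℂ) ^ 2) * Complex.exp (2 * π * I * (n : ℂ) * v)

/-- Dedekind's eta function. -/
def dedekindEta (τ : ℂ) : ℂ :=
  Complex.exp (π * I * τ / 12) * ∏' n : ℕ, (1 - Complex.exp (2 * π * I * ((n : ℂ) + 1) * τ))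

/-- For type D_N:
M_j(z) = e^{2πiJz/L} θ₂(Jτ + 𝒩z/L; 𝒩τ) + e^{−2πiJz/L} θ₂(Jτ − 𝒩z/L; 𝒩τ), τ = iW/L. -/
def MD (nn : ℕ) (L W : ℝ) (Jj : ℝ) (z : ℂ) : ℂ :=
  Complex.exp (2 * π * I * Jj * z / L) *
      jtheta2 ((Jj : ℂ) * (I * W / L) + nn * z / L) (nn * (I * W / L)) +
    Complex.exp (-(2 * π * I * Jj * z / L)) *
      jtheta2 ((Jj : ℂ) * (I * W / L) - nn * z / L) (nn * (I * W / L))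

/-- h_j = c_j (LW/√(2𝒩W/L)) e^{2πW J(j)²/(𝒩L)}, c_j = 4 for j ∈ {1, N}, c_j = 2 otherwise
(0-based index j, J(j) = j). -/
def hD (N nn : ℕ) (L W : ℝ) (j : Fin N) : ℝ :=
  (if (j : ℕ) = 0 ∨ (j : ℕ) = N - 1 then 4 else 2) *
    (L * W / Real.sqrt (2 * nn * W / L)) *
    Real.exp (2 * π * W * ((j : ℕ) : ℝ) ^ 2 / (nn * L))

/-- The type D_N correlation kernel with 𝒩 = 2(N−1), L = N/(ρW), τ = iρW²/N. -/
def KD (N : ℕ) (ρ W : ℝ) (z z' : ℂ) : ℂ :=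
  let L : ℝ := N / (ρ * W)
  Complex.exp (-(π * (2 * (N - 1)) * (z.im ^ 2 + z'.im ^ 2) / (L * W))) *
    ∑ n : Fin N,
      MD (2 * (N - 1)) L W ((n : ℕ) : ℝ) z * conj (MD (2 * (N - 1)) L W ((n : ℕ) : ℝ) z') /
        hD N (2 * (N - 1)) L W n

/-!
Put `r = 1 - 1/N` and `s_j = J(j) √ρ W / N`. Since `𝒩 τ_N = 2iρW² r` and `𝒩 / L_N = 2ρW r`,
`M_j(z) = profile r z s_j` for a function `profile` built from `θ₂(· ; 2iρW² r)`, and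
`M_j(z) conj(M_j(z')) / h_j` is `√ρ W / N` times an endpoint weight times `density r s_j`, where
`density` is jointly continuous in `r > 0` and `s`. So `K_N` is a weighted Riemann sum of
`density (1 - 1/N)` over `[0, √ρ W]`; as the integral of a step function it converges by dominated
convergence (the density is bounded on `[1/2, 1] × [0, √ρ W]`) to `∫₀^{√ρ W} density 1`. Finally
`profile 1 z s = A(s) + A(-s)` with `A(s) = e^{2πi√ρ z s} θ₂(√ρ W (is + 2√ρ z); 2iρW²)`, and since
`θ₂` is even, the integral over `[0, √ρ W]` unfolds into the two integrals over `[-√ρ W, √ρ W]`.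
-/

namespace TypeDKernel

open Filter Finset Set MeasureTheory Topology

lemma jtheta2_eq_jacobiTheta₂ (v τ : ℂ) :
    jtheta2 v τ = cexp (π * I * τ / 4 - π * I * v) * jacobiTheta₂ (v - τ / 2) τ := by
  rw [jtheta2, jacobiTheta₂, ← tsum_mul_left]
  refine tsum_congr fun n => ?_
  rw [jacobiTheta₂_term, ← Complex.exp_add, ← Complex.exp_add]
  ring_nf

lemma jtheta2_neg (v τ : ℂ) : jtheta2 (-v) τ = jtheta2 v τ := by
  rw [jtheta2_eq_jacobiTheta₂, jtheta2_eq_jacobiTheta₂, ← jacobiTheta₂_neg_left,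
    show -(-v - τ / 2) = v - τ / 2 + τ by ring, jacobiTheta₂_add_left', ← mul_assoc,
    ← Complex.exp_add]
  ring_nf

lemma conj_jtheta2 (v τ : ℂ) : conj (jtheta2 v τ) = jtheta2 (-conj v) (-conj τ) := by
  rw [jtheta2_eq_jacobiTheta₂, jtheta2_eq_jacobiTheta₂, map_mul, jacobiTheta₂_conj,
    ← Complex.exp_conj, ← jacobiTheta₂_neg_left (-conj v - _)]
  simp only [map_sub, map_mul, map_div₀, Complex.conj_I, Complex.conj_ofReal, map_ofNat]
  ring_nf

lemma _root_.ContinuousAt.jtheta2 {X : Type*} [TopologicalSpace X] {f g : X → ℂ} {x : X}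
    (hf : ContinuousAt f x) (hg : ContinuousAt g x) (hτ : 0 < (g x).im) :
    ContinuousAt (fun y => jtheta2 (f y) (g y)) x := by
  simp_rw [jtheta2_eq_jacobiTheta₂]
  refine ContinuousAt.mul (by fun_prop) ?_
  exact ContinuousAt.comp (x := x) (f := fun y => (f y - g y / 2, g y))
    (continuousAt_jacobiTheta₂ _ hτ) ((hf.sub (hg.div_const 2)).prodMk hg)

section StepFunctions

variable {E : Type*} [NormedAddCommGroup E]

lemma eqOn_nat_floor_div {h : ℝ} (hh : 0 < h) (j : ℕ) :
    EqOn (fun s => ⌊s / h⌋₊) (fun _ => j) (Ioo (j * h) ((j + 1 : ℕ) * h)) := fun s hs => by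
  rw [Nat.floor_eq_iff (div_nonneg ((by positivity : (0 : ℝ) ≤ j * h).trans hs.1.le) hh.le),
    le_div_iff₀ hh, div_lt_iff₀ hh]
  exact ⟨hs.1.le, by exact_mod_cast hs.2⟩

lemma intervalIntegrable_comp_nat_floor_div (f : ℕ → E) {h : ℝ} (hh : 0 < h) (j : ℕ) :
    IntervalIntegrable (fun s => f ⌊s / h⌋₊) volume (j * h) ((j + 1 : ℕ) * h) := by
  rw [intervalIntegrable_iff_integrableOn_Ioc_of_le (by gcongr; simp),
    integrableOn_Ioc_iff_integrableOn_Ioo]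
  exact (integrableOn_const (by simp)).congr_fun
    (fun s hs => congrArg f (eqOn_nat_floor_div hh j hs).symm) measurableSet_Ioo

lemma integral_comp_nat_floor_div_step [NormedSpace ℝ E] [CompleteSpace E] (f : ℕ → E) {h : ℝ}
    (hh : 0 < h) (j : ℕ) : ∫ s in (j * h)..((j + 1 : ℕ) * h), f ⌊s / h⌋₊ = h • f j := by
  have hle : (j : ℝ) * h ≤ (j + 1 : ℕ) * h := by gcongr; simp
  calc ∫ s in (j * h)..((j + 1 : ℕ) * h), f ⌊s / h⌋₊
      = ∫ _ in (j * h)..((j + 1 : ℕ) * h), f j := by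
        simp only [intervalIntegral.integral_of_le hle, integral_Ioc_eq_integral_Ioo]
        exact setIntegral_congr_fun measurableSet_Ioo
          fun s hs => congrArg f (eqOn_nat_floor_div hh j hs)
    _ = h • f j := by rw [intervalIntegral.integral_const]; push_cast; ring_nf

lemma sum_range_smul_eq_integral_nat_floor_div [NormedSpace ℝ E] [CompleteSpace E] (f : ℕ → E)
    {h : ℝ} (hh : 0 < h) (N : ℕ) :
    ∑ j ∈ range N, h • f j = ∫ s in (0 : ℝ)..N * h, f ⌊s / h⌋₊ := by
  have hsum := intervalIntegral.sum_integral_adjacent_intervals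
    (a := fun j : ℕ => (j : ℝ) * h) (n := N)
    (fun j _ => intervalIntegrable_comp_nat_floor_div f hh j)
  simp only [Nat.cast_zero, zero_mul] at hsum
  rw [← hsum]
  exact sum_congr rfl fun j _ => (integral_comp_nat_floor_div_step f hh j).symm

lemma nat_floor_div_mul_le {h s : ℝ} (hh : 0 < h) (hs : 0 ≤ s) : ⌊s / h⌋₊ * h ≤ s :=
  (le_div_iff₀ hh).1 (Nat.floor_le (div_nonneg hs hh.le))

lemma sub_lt_nat_floor_div_mul {h : ℝ} (hh : 0 < h) (s : ℝ) : s - h < ⌊s / h⌋₊ * h := by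
  have := (div_lt_iff₀ hh).1 (Nat.lt_floor_add_one (s / h))
  linarith

lemma tendsto_nat_floor_div_mul {α : Type*} {l : Filter α} {h : α → ℝ}
    (hpos : ∀ᶠ x in l, 0 < h x) (h0 : Tendsto h l (𝓝 0)) {s : ℝ} (hs : 0 ≤ s) :
    Tendsto (fun x => ⌊s / h x⌋₊ * h x) l (𝓝 s) := by
  refine tendsto_of_tendsto_of_tendsto_of_le_of_le' (g := fun x => s - h x) ?_
    tendsto_const_nhds ?_ ?_
  · simpa using (tendsto_const_nhds (x := s)).sub h0
  · filter_upwards [hpos] with x hx using (sub_lt_nat_floor_div_mul hx s).le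
  · filter_upwards [hpos] with x hx using nat_floor_div_mul_le hx hs

/-- This is `2 / c_j`, where `c_j ∈ {4, 2}` is the constant in `hD`. -/
def endpointWeight (N j : ℕ) : ℝ := if j = 0 ∨ j = N - 1 then 1 / 2 else 1

lemma eventually_endpointWeight_eq_one {a s : ℝ} (hs : s ∈ Ioo 0 a) :
    ∀ᶠ N : ℕ in atTop, endpointWeight N ⌊s / (a / N)⌋₊ = 1 := by
  have ha : 0 < a := hs.1.trans hs.2
  have hmesh : Tendsto (fun N : ℕ => a / N) atTop (𝓝 0) := tendsto_const_div_atTop_nhds_zero_nat a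
  have hmesh_pos : ∀ᶠ N : ℕ in atTop, 0 < a / N :=
    (eventually_gt_atTop 0).mono fun N hN => by positivity
  filter_upwards [hmesh_pos, (tendsto_nat_floor_div_mul hmesh_pos hmesh hs.1.le).eventually
    (lt_mem_nhds hs.1), hmesh.eventually (gt_mem_nhds (sub_pos.2 hs.2))] with N hN hpos hsmall
  have hN1 : 1 ≤ N := Nat.one_le_iff_ne_zero.2 fun h => by simp [h] at hN
  have hlt : (⌊s / (a / N)⌋₊ : ℝ) < N - 1 := by
    have hfl := nat_floor_div_mul_le hN hs.1.le
    have : ((N : ℝ) - 1) * (a / N) = a - a / N := by field_simp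
    nlinarith
  rw [endpointWeight, if_neg]
  rintro (h0 | h1)
  · simp [h0] at hpos
  · rw [h1, Nat.cast_sub hN1, Nat.cast_one] at hlt
    exact lt_irrefl _ hlt

lemma tendsto_integral_endpointWeight_smul [NormedSpace ℝ E] {F : ℝ × ℝ → E} {K : Set ℝ}
    {a r₀ : ℝ} {r : ℕ → ℝ} (ha : 0 < a) (hK : IsCompact K) (hF : ContinuousOn F (K ×ˢ Icc 0 a))
    (hr₀ : r₀ ∈ K) (hr : Tendsto r atTop (𝓝 r₀)) (hrK : ∀ᶠ N in atTop, r N ∈ K) :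
    Tendsto (fun N : ℕ => ∫ s in (0 : ℝ)..a,
        endpointWeight N ⌊s / (a / N)⌋₊ • F (r N, ⌊s / (a / N)⌋₊ * (a / N)))
      atTop (𝓝 (∫ s in (0 : ℝ)..a, F (r₀, s))) := by
  obtain ⟨C, hC⟩ := (hK.prod isCompact_Icc).exists_bound_of_continuousOn hF
  have hmesh : Tendsto (fun N : ℕ => a / N) atTop (𝓝 0) := tendsto_const_div_atTop_nhds_zero_nat a
  have hmesh_pos : ∀ᶠ N : ℕ in atTop, 0 < a / N :=
    (eventually_gt_atTop 0).mono fun N hN => by positivity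
  have hmem : ∀ s ∈ Ioc 0 a, ∀ᶠ N : ℕ in atTop,
      (r N, ⌊s / (a / N)⌋₊ * (a / N)) ∈ K ×ˢ Icc 0 a := fun s hs => by
    filter_upwards [hrK, hmesh_pos] with N hrN hN
    exact ⟨hrN, by positivity, (nat_floor_div_mul_le hN hs.1.le).trans hs.2⟩
  refine intervalIntegral.tendsto_integral_filter_of_dominated_convergence (fun _ => C)
    (Eventually.of_forall fun N => ?_) ?_ intervalIntegrable_const ?_
  · exact ((StronglyMeasurable.of_discrete
      (f := fun j : ℕ => endpointWeight N j • F (r N, j * (a / N)))).comp_measurable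
      (measurable_id.div_const _).nat_floor).aestronglyMeasurable
  · filter_upwards [hrK, hmesh_pos] with N hrN hN
    refine ae_of_all _ fun s hs => ?_
    rw [uIoc_of_le ha.le] at hs
    have hw : |endpointWeight N ⌊s / (a / N)⌋₊| ≤ 1 := by
      unfold endpointWeight; split_ifs <;> norm_num
    rw [norm_smul, Real.norm_eq_abs]
    exact (mul_le_mul hw (hC _ ⟨hrN, by positivity, (nat_floor_div_mul_le hN hs.1.le).trans hs.2⟩)
      (norm_nonneg _) zero_le_one).trans_eq (one_mul C)
  · filter_upwards [Measure.ae_ne volume a] with s hsa hs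
    rw [uIoc_of_le ha.le] at hs
    have hs' : s ∈ Ioo 0 a := ⟨hs.1, lt_of_le_of_ne hs.2 hsa⟩
    have hFlim := (hF (r₀, s) ⟨hr₀, Ioo_subset_Icc_self hs'⟩).tendsto.comp
      (tendsto_nhdsWithin_iff.2
        ⟨hr.prodMk_nhds (tendsto_nat_floor_div_mul hmesh_pos hmesh hs'.1.le), hmem s hs⟩)
    refine hFlim.congr' ?_
    filter_upwards [eventually_endpointWeight_eq_one hs'] with N hN
    simp [hN]

end StepFunctions

lemma integral_add_comp_neg {E : Type*} [NormedAddCommGroup E] [NormedSpace ℝ E] {f : ℝ → E}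
    (hf : Continuous f) (a : ℝ) :
    ∫ s in (0 : ℝ)..a, (f s + f (-s)) = ∫ s in -a..a, f s := by
  have hneg : Continuous fun s => f (-s) := hf.comp continuous_neg
  rw [intervalIntegral.integral_add (hf.intervalIntegrable _ _) (hneg.intervalIntegrable _ _),
    intervalIntegral.integral_comp_neg, neg_zero, add_comm,
    intervalIntegral.integral_add_adjacent_intervals (hf.intervalIntegrable _ _)
      (hf.intervalIntegrable _ _)]

section Profile

variable (ρ W : ℝ)

def thetaTerm (r : ℝ) (w : ℂ) (s : ℝ) : ℂ :=
  cexp (2 * π * I * Real.sqrt ρ * w * s) *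
    jtheta2 (Real.sqrt ρ * W * (I * s + 2 * Real.sqrt ρ * r * w)) (2 * I * ρ * W ^ 2 * r)

def profile (r : ℝ) (w : ℂ) (s : ℝ) : ℂ := thetaTerm ρ W r w s + thetaTerm ρ W r w (-s)

def density (z z' : ℂ) (r s : ℝ) : ℂ :=
  (ρ * Real.sqrt r * Real.exp (-(π * s ^ 2 / r)) : ℝ) *
    (profile ρ W r z s * profile ρ W r (conj z') s)

variable {ρ W}

lemma conj_thetaTerm (r : ℝ) (w : ℂ) (s : ℝ) :
    conj (thetaTerm ρ W r w s) = thetaTerm ρ W r (conj w) (-s) := by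
  rw [thetaTerm, thetaTerm, map_mul, ← Complex.exp_conj, conj_jtheta2, ← jtheta2_neg]
  simp only [map_mul, map_add, map_ofNat, Complex.conj_I, Complex.conj_ofReal, map_pow,
    Complex.ofReal_neg]
  ring_nf

lemma conj_profile (r : ℝ) (w : ℂ) (s : ℝ) :
    conj (profile ρ W r w s) = profile ρ W r (conj w) s := by
  rw [profile, profile, map_add, conj_thetaTerm, conj_thetaTerm, neg_neg, add_comm]

lemma continuousAt_thetaTerm (hρ : 0 < ρ) (hW : W ≠ 0) (w : ℂ) {p : ℝ × ℝ} (hp : 0 < p.1) :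
    ContinuousAt (fun q : ℝ × ℝ => thetaTerm ρ W q.1 w q.2) p := by
  refine ContinuousAt.mul (by fun_prop) (ContinuousAt.jtheta2 (by fun_prop) (by fun_prop) ?_)
  have : (2 * I * ρ * W ^ 2 * p.1 : ℂ) = ((2 * ρ * W ^ 2 * p.1 : ℝ) : ℂ) * I := by
    push_cast; ring
  rw [this, Complex.im_ofReal_mul, Complex.I_im, mul_one]
  positivity

lemma continuous_thetaTerm (hρ : 0 < ρ) (hW : W ≠ 0) {r : ℝ} (hr : 0 < r) (w : ℂ) :
    Continuous (thetaTerm ρ W r w) :=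
  continuous_iff_continuousAt.2 fun s =>
    ContinuousAt.comp (x := s) (f := fun s : ℝ => (r, s))
      (continuousAt_thetaTerm hρ hW w (p := (r, s)) hr) (by fun_prop)

lemma continuousAt_profile (hρ : 0 < ρ) (hW : W ≠ 0) (w : ℂ) {p : ℝ × ℝ} (hp : 0 < p.1) :
    ContinuousAt (fun q : ℝ × ℝ => profile ρ W q.1 w q.2) p :=
  (continuousAt_thetaTerm hρ hW w hp).add <|
    ContinuousAt.comp (x := p) (f := fun q : ℝ × ℝ => (q.1, -q.2))
      (continuousAt_thetaTerm hρ hW w (p := (p.1, -p.2)) hp) (by fun_prop)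

lemma continuousOn_density (hρ : 0 < ρ) (hW : W ≠ 0) (z z' : ℂ) :
    ContinuousOn (fun p : ℝ × ℝ => density ρ W z z' p.1 p.2) {p | 0 < p.1} := by
  intro p hp
  refine ContinuousAt.continuousWithinAt (ContinuousAt.mul ?_
    ((continuousAt_profile hρ hW z hp).mul (continuousAt_profile hρ hW _ hp)))
  exact Complex.continuous_ofReal.continuousAt.comp (by fun_prop (disch := exact hp.ne'))

lemma integral_density_one (hρ : 0 < ρ) (hW : W ≠ 0) (z z' : ℂ) :
    ∫ s in (0 : ℝ)..(Real.sqrt ρ * W), density ρ W z z' 1 s =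
      ρ * ((∫ l in (-(Real.sqrt ρ * W))..(Real.sqrt ρ * W),
            Complex.exp (-(π * l ^ 2) + 2 * π * I * Real.sqrt ρ * (z - conj z') * l) *
              jtheta2 (Real.sqrt ρ * W * (I * l + 2 * Real.sqrt ρ * z)) (2 * I * ρ * W ^ 2) *
              jtheta2 (Real.sqrt ρ * W * (I * l - 2 * Real.sqrt ρ * conj z'))
                (2 * I * ρ * W ^ 2)) +
          ∫ l in (-(Real.sqrt ρ * W))..(Real.sqrt ρ * W),
            Complex.exp (-(π * l ^ 2) + 2 * π * I * Real.sqrt ρ * (z + conj z') * l) *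
              jtheta2 (Real.sqrt ρ * W * (I * l + 2 * Real.sqrt ρ * z)) (2 * I * ρ * W ^ 2) *
              jtheta2 (Real.sqrt ρ * W * (I * l + 2 * Real.sqrt ρ * conj z'))
                (2 * I * ρ * W ^ 2)) := by
  have hA : ∀ w, Continuous (thetaTerm ρ W 1 w) := continuous_thetaTerm hρ hW one_pos
  have hgauss : Continuous fun s : ℝ => cexp (-(π * s ^ 2)) := by fun_prop
  let f₁ : ℝ → ℂ := fun s =>
    cexp (-(π * s ^ 2)) * thetaTerm ρ W 1 z s * thetaTerm ρ W 1 (conj z') (-s)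
  let f₂ : ℝ → ℂ := fun s =>
    cexp (-(π * s ^ 2)) * thetaTerm ρ W 1 z s * thetaTerm ρ W 1 (conj z') s
  have hf₁ : Continuous f₁ := (hgauss.mul (hA z)).mul ((hA _).comp continuous_neg)
  have hf₂ : Continuous f₂ := (hgauss.mul (hA z)).mul (hA _)
  calc ∫ s in (0 : ℝ)..(Real.sqrt ρ * W), density ρ W z z' 1 s
      = ∫ s in (0 : ℝ)..(Real.sqrt ρ * W), ρ * ((f₁ s + f₂ s) + (f₁ (-s) + f₂ (-s))) := by
        refine intervalIntegral.integral_congr fun s _ => ?_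
        simp only [f₁, f₂, density, profile, neg_neg, Real.sqrt_one, div_one]
        push_cast [neg_sq]
        ring
    _ = ρ * ((∫ l in (-(Real.sqrt ρ * W))..(Real.sqrt ρ * W), f₁ l) +
          ∫ l in (-(Real.sqrt ρ * W))..(Real.sqrt ρ * W), f₂ l) := by
        rw [intervalIntegral.integral_const_mul,
          integral_add_comp_neg (f := fun s => f₁ s + f₂ s) (hf₁.add hf₂),
          intervalIntegral.integral_add (hf₁.intervalIntegrable _ _) (hf₂.intervalIntegrable _ _)]
    _ = _ := by
        congr 2 <;> refine intervalIntegral.integral_congr fun l _ => ?_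
        · simp only [f₁, thetaTerm, Complex.ofReal_one, mul_one, Complex.ofReal_neg]
          rw [← jtheta2_neg (_ * (I * -_ + _)), Complex.exp_add,
            show 2 * π * I * Real.sqrt ρ * (z - conj z') * l =
              2 * π * I * Real.sqrt ρ * z * l + 2 * π * I * Real.sqrt ρ * conj z' * -l by ring,
            Complex.exp_add]
          ring_nf
        · simp only [f₂, thetaTerm, Complex.ofReal_one, mul_one]
          rw [Complex.exp_add, show 2 * π * I * Real.sqrt ρ * (z + conj z') * l =
              2 * π * I * Real.sqrt ρ * z * l + 2 * π * I * Real.sqrt ρ * conj z' * l by ring,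
            Complex.exp_add]
          ring

end Profile

section Kernel

variable {ρ W : ℝ}

lemma MD_eq_profile (hρ : 0 ≤ ρ) {N : ℕ} (hN : 1 ≤ N) (j : ℝ) (z : ℂ) :
    MD (2 * (N - 1)) (N / (ρ * W)) W j z =
      profile ρ W (1 - 1 / N) z (j * (Real.sqrt ρ * W / N)) := by
  have hsq : ((Real.sqrt ρ : ℝ) : ℂ) ^ 2 = ρ := by rw [← Complex.ofReal_pow, Real.sq_sqrt hρ]
  have hN0 : (N : ℂ) ≠ 0 := by exact_mod_cast (by omega : N ≠ 0)
  have hcast : ((2 * (N - 1) : ℕ) : ℂ) = 2 * (N - 1) := by push_cast [Nat.cast_sub hN]; ring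
  rw [MD, profile, thetaTerm, thetaTerm, hcast, ← jtheta2_neg (_ * (I * ((-_ : ℝ) : ℂ) + _))]
  push_cast
  rw [← hsq]
  congr 3 <;> field_simp
  ring

lemma inv_hD_eq (hρ : 0 < ρ) (hW : 0 < W) {N : ℕ} (hN : 2 ≤ N) (j : Fin N) :
    (hD N (2 * (N - 1)) (N / (ρ * W)) W j)⁻¹ =
      Real.sqrt ρ * W / N * (endpointWeight N j * (ρ * Real.sqrt (1 - 1 / N) *
        Real.exp (-(π * ((j : ℕ) * (Real.sqrt ρ * W / N)) ^ 2 / (1 - 1 / N))))) := by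
  have hsq : Real.sqrt ρ ^ 2 = ρ := Real.sq_sqrt hρ.le
  have hN1 : (1 : ℝ) < N := by exact_mod_cast hN
  have hcast : ((2 * (N - 1) : ℕ) : ℝ) = 2 * (N - 1) := by
    push_cast [Nat.cast_sub (by omega : 1 ≤ N)]; ring
  have hsqrt : Real.sqrt (2 * ((2 * (N - 1) : ℕ) : ℝ) * W / (N / (ρ * W))) =
      2 * Real.sqrt ρ * W * Real.sqrt (1 - 1 / N) := by
    rw [show 2 * ((2 * (N - 1) : ℕ) : ℝ) * W / (N / (ρ * W)) =
        (2 * Real.sqrt ρ * W) ^ 2 * (1 - 1 / N) by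
      rw [hcast, mul_pow, mul_pow, hsq]; field_simp,
      Real.sqrt_mul (sq_nonneg _), Real.sqrt_sq (by positivity)]
  have hexp : 2 * π * W * ((j : ℕ) : ℝ) ^ 2 / (((2 * (N - 1) : ℕ) : ℝ) * (N / (ρ * W))) =
      π * ((j : ℕ) * (Real.sqrt ρ * W / N)) ^ 2 / (1 - 1 / N) := by
    rw [hcast, mul_pow, div_pow, mul_pow, hsq]
    field_simp
  have hweight : (if (j : ℕ) = 0 ∨ (j : ℕ) = N - 1 then 4 else 2 : ℝ) =
      2 / endpointWeight N j := by
    unfold endpointWeight; split_ifs <;> norm_num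
  rw [hD, hsqrt, hexp, hweight, Real.exp_neg]
  field_simp

lemma KD_eq_sum (hρ : 0 < ρ) (hW : 0 < W) {N : ℕ} (hN : 2 ≤ N) (z z' : ℂ) :
    KD N ρ W z z' = cexp (-(2 * π * ρ * (1 - 1 / N : ℝ) * (z.im ^ 2 + z'.im ^ 2))) *
      ∑ j ∈ range N, (Real.sqrt ρ * W / N) •
        (endpointWeight N j • density ρ W z z' (1 - 1 / N) (j * (Real.sqrt ρ * W / N))) := by
  have hN0 : (N : ℂ) ≠ 0 := by exact_mod_cast (by omega : N ≠ 0)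
  have hW0 : (W : ℂ) ≠ 0 := by exact_mod_cast hW.ne'
  rw [KD, ← Fin.sum_univ_eq_sum_range]
  congr 1
  · push_cast
    field_simp
  · refine sum_congr rfl fun j _ => ?_
    rw [MD_eq_profile hρ.le (by omega), MD_eq_profile hρ.le (by omega), conj_profile,
      div_eq_mul_inv, ← Complex.ofReal_inv, inv_hD_eq hρ hW hN, density]
    simp only [Complex.real_smul]
    push_cast
    ring

end Kernel

end TypeDKernel

open TypeDKernel Filter Set Topology in
theorem statement14 (ρ W : ℝ) (hρ : 0 < ρ) (hW : 0 < W) (z z' : ℂ) :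
    Filter.Tendsto (fun N : ℕ => KD N ρ W z z') Filter.atTop
      (nhds (ρ * Complex.exp (-(2 * π * ρ * (z.im ^ 2 + z'.im ^ 2))) *
        ((∫ l in (-(Real.sqrt ρ * W))..(Real.sqrt ρ * W),
            Complex.exp (-(π * l ^ 2) + 2 * π * I * Real.sqrt ρ * (z - conj z') * l) *
              jtheta2 (Real.sqrt ρ * W * (I * l + 2 * Real.sqrt ρ * z)) (2 * I * ρ * W ^ 2) *
              jtheta2 (Real.sqrt ρ * W * (I * l - 2 * Real.sqrt ρ * conj z'))
                (2 * I * ρ * W ^ 2)) +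
          ∫ l in (-(Real.sqrt ρ * W))..(Real.sqrt ρ * W),
            Complex.exp (-(π * l ^ 2) + 2 * π * I * Real.sqrt ρ * (z + conj z') * l) *
              jtheta2 (Real.sqrt ρ * W * (I * l + 2 * Real.sqrt ρ * z)) (2 * I * ρ * W ^ 2) *
              jtheta2 (Real.sqrt ρ * W * (I * l + 2 * Real.sqrt ρ * conj z'))
                (2 * I * ρ * W ^ 2)))) := by
  have ha : 0 < Real.sqrt ρ * W := by positivity
  have hr : Tendsto (fun N : ℕ => 1 - 1 / (N : ℝ)) atTop (𝓝 1) := by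
    simpa using tendsto_const_nhds.sub (tendsto_one_div_atTop_nhds_zero_nat (𝕜 := ℝ))
  have hrK : ∀ᶠ N : ℕ in atTop, 1 - 1 / (N : ℝ) ∈ Icc (1 / 2) 1 := by
    filter_upwards [eventually_ge_atTop 2] with N hN
    have : (2 : ℝ) ≤ N := by exact_mod_cast hN
    constructor
    · rw [le_sub_comm, div_le_iff₀ (by positivity)]; linarith
    · rw [sub_le_self_iff]; positivity
  have hF : ContinuousOn (fun p : ℝ × ℝ => density ρ W z z' p.1 p.2)
      (Icc (1 / 2) 1 ×ˢ Icc 0 (Real.sqrt ρ * W)) :=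
    (continuousOn_density hρ hW.ne' z z').mono fun p hp => by
      show 0 < p.1; linarith [hp.1.1]
  have hprefactor : Continuous fun r : ℝ => cexp (-(2 * π * ρ * r * (z.im ^ 2 + z'.im ^ 2))) := by
    fun_prop
  have hlim := ((hprefactor.tendsto 1).comp hr).mul
    (tendsto_integral_endpointWeight_smul ha isCompact_Icc hF (by norm_num) hr hrK)
  rw [Complex.ofReal_one, mul_one, integral_density_one hρ hW.ne'] at hlim
  convert hlim.congr' ?_ using 2
  · ring
  · filter_upwards [eventually_ge_atTop 2] with N hN
    rw [KD_eq_sum hρ hW hN, sum_range_smul_eq_integral_nat_floor_div _ (by positivity),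
      mul_div_cancel₀ _ (by positivity : (N : ℝ) ≠ 0)]
    rfl
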